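/- Stability of the backward step: assume in addition that f is uniformly Lipschitz in its second variable with constant K, i.e. |f(x,ξ₂) − f(x,ξ₁)| ≤ K|ξ₂ − ξ₁| for all x ∈ [0,1] and ξ₁, ξ₂ ≥ 0. Then for every ν > 0 there exists C > 0 (depending only on ν, T, σ, K, ‖u_T‖_∞, ‖f‖_∞, ‖m_0‖_∞) such that for all integers I, J ≥ 1 with 1/Δt > 1 + (K/σ²)·max(‖exp(u_T/σ²)‖²_∞, ‖m_0‖²_∞/ε²) + ν, the following holds for every n ∈ ℕ: for every ψ̃ ∈ M_0 and every φ̃ ∈ M_ε with φ̃_{I,j} = exp(u_T(x_j)/σ²) for all j, defining the residual η̃_{i,j} := (φ̃_{i+1,j} − φ̃_{i,j})/Δt + (σ²/2)(φ̃_{i,j+1} − 2φ̃_{i,j} + φ̃_{i,j-1})/(Δx)² + (1/σ²) f(x_j, φ̃_{i,j} ψ̃_{i,j}) φ̃_{i,j} for 0 ≤ i ≤ I−1, 0 ≤ j ≤ J (and η̃_{I,j} := 0), one has ‖φ̂^{n+1/2} − φ̃‖² ≤ C‖ψ̂ⁿ − ψ̃‖² + C‖η̃‖², where φ̂^{n+1/2},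 ψ̂ⁿ are the scheme iterates. -/

import Mathlib

noncomputable section

open Real Filter

/-- Sup of `|g|` over `[0,1]` (the sup norm `‖g‖_∞`). -/
def supIcc (g : ℝ → ℝ) : ℝ := ⨆ x : Set.Icc (0:ℝ) 1, |g (x : ℝ)|

/-- Sup of `|f|` over `[0,1] × ℝ` (the sup norm `‖f‖_∞`). -/
def supF (f : ℝ → ℝ → ℝ) : ℝ := ⨆ p : Set.Icc (0:ℝ) 1 × ℝ, |f (p.1 : ℝ) p.2|

/-- Membership in `M_ε`: all grid entries (for `i ≤ I`, `j ≤ J`) are at least `ε`. -/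
def MemM (I J : ℕ) (ε : ℝ) (m : ℕ → ℕ → ℝ) : Prop :=
  ∀ i ≤ I, ∀ j ≤ J, ε ≤ m i j

/-- The discrete backward scheme `(Ê_φ)` with data `ψ`.  Here `Δt = T/I`, `Δx = 1/J`,
`x_j = j/J`, and the Neumann conventions `m_{i,-1} = m_{i,0}`, `m_{i,J+1} = m_{i,J}`
are realized by the clamped indices `j - 1` (truncated `ℕ`-subtraction) and `min (j+1) J`. -/
def BScheme (T σ : ℝ) (I J : ℕ) (f : ℝ → ℝ → ℝ) (uT : ℝ → ℝ)
    (ψ φ : ℕ → ℕ → ℝ) : Prop :=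
  (∀ i < I, ∀ j ≤ J,
      (φ (i+1) j - φ i j) / (T / (I:ℝ))
        + σ^2 / 2 * ((φ i (min (j+1) J) - 2 * φ i j + φ i (j-1)) / (1/(J:ℝ))^2)
      = -(1/σ^2) * f ((j:ℝ)/(J:ℝ)) (φ i j * ψ i j) * φ i j)
  ∧ ∀ j ≤ J, φ I j = Real.exp (uT ((j:ℝ)/(J:ℝ)) / σ^2)

/-- The discrete forward scheme `(Ê_ψ)` with data `φ` (same conventions as `BScheme`). -/
def FScheme (T σ : ℝ) (I J : ℕ) (f : ℝ → ℝ → ℝ) (m0 : ℝ → ℝ)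
    (φ ψ : ℕ → ℕ → ℝ) : Prop :=
  (∀ i < I, ∀ j ≤ J,
      (ψ (i+1) j - ψ i j) / (T / (I:ℝ))
        - σ^2 / 2 * ((ψ (i+1) (min (j+1) J) - 2 * ψ (i+1) j + ψ (i+1) (j-1)) / (1/(J:ℝ))^2)
      = (1/σ^2) * f ((j:ℝ)/(J:ℝ)) (φ (i+1) j * ψ (i+1) j) * ψ (i+1) j)
  ∧ ∀ j ≤ J, ψ 0 j = m0 ((j:ℝ)/(J:ℝ)) / φ 0 j

/-- Squared grid norm `‖m‖² = max_{0 ≤ i ≤ I} (1/(J+1)) Σ_{j=0}^{J} m_{i,j}²`. -/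
def gnormSq (I J : ℕ) (m : ℕ → ℕ → ℝ) : ℝ :=
  (Finset.range (I+1)).sup' (Finset.nonempty_range_iff.mpr (Nat.succ_ne_zero I))
    (fun i => (1/((J:ℝ)+1)) * ∑ j ∈ Finset.range (J+1), (m i j)^2)

/-- Grid norm `‖m‖`. -/
def gnorm (I J : ℕ) (m : ℕ → ℕ → ℝ) : ℝ := Real.sqrt (gnormSq I J m)

/-!
The discrete maximum principle keeps every iterate `φ̂` in `[0, B]`, `B = ‖exp (u_T/σ²)‖_∞`, and
every `ψ̂` nonnegative. Subtracting the equation for `φ̃` (with residual `η̃`) from that for `φ̂`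
and testing against the error `e = φ̂ - φ̃` row by row, the Neumann Laplacian contributes a
nonpositive term (summation by parts), and since `f ≤ 0` is nonincreasing and `K`-Lipschitz the
nonlinearity contributes at most `L |ψ̂ - ψ̃| |e|` with `L = K B² / σ²`. Young's inequality then
gives the backward recursion
`(1 - Δt (L + 1)) ‖e_i‖² ≤ ‖e_{i+1}‖² + Δt (L ‖ψ̂_i - ψ̃_i‖² + ‖η̃_i‖²)`, `e_I = 0`.
Under the CFL condition `1 - Δt (L + 1) > ν / (L + 1 + ν)`, so the amplification
`(1 - Δt (L + 1))^{-I}` is at most `exp (T (L + 1) (L + 1 + ν) / ν)`, uniformly in `I`.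
-/

open Finset

def neumannLap (J : ℕ) (v : ℕ → ℝ) (j : ℕ) : ℝ := v (min (j + 1) J) - 2 * v j + v (j - 1)

lemma sum_neumannLap_mul_self (J : ℕ) (v : ℕ → ℝ) :
    ∑ j ∈ range (J + 1), neumannLap J v j * v j = -∑ j ∈ range J, (v (j + 1) - v j) ^ 2 := by
  induction J with
  | zero => simp [neumannLap]; left; ring
  | succ J ih =>
    have hinterior : ∀ j ∈ range J, neumannLap (J + 1) v j * v j = neumannLap J v j * v j := by
      intro j hj
      have hj : j < J := mem_range.mp hj
      simp only [neumannLap, min_eq_left (show j + 1 ≤ J + 1 by omega),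
        min_eq_left (show j + 1 ≤ J by omega)]
    rw [sum_range_succ, sum_range_succ, sum_congr rfl hinterior, sum_range_succ (fun j => _ ^ 2)]
    rw [sum_range_succ, neumannLap, min_eq_right (Nat.le_succ J)] at ih
    have hlast : neumannLap (J + 1) v (J + 1) = v J - v (J + 1) := by simp [neumannLap]; ring
    have hpenult : neumannLap (J + 1) v J = v (J + 1) - 2 * v J + v (J - 1) := by
      simp [neumannLap]
    rw [hlast, hpenult]
    linear_combination ih

lemma exists_isMin_neumannLap_nonneg (J : ℕ) (v : ℕ → ℝ) :
    ∃ j₀ ≤ J, (∀ j ≤ J, v j₀ ≤ v j) ∧ 0 ≤ neumannLap J v j₀ := by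
  obtain ⟨j₀, hj₀, hmin⟩ := exists_min_image (range (J + 1)) v nonempty_range_add_one
  have hle : ∀ j ≤ J, v j₀ ≤ v j := fun j hj => hmin j (mem_range.mpr (by omega))
  refine ⟨j₀, by simpa [Nat.lt_succ_iff] using hj₀, hle, ?_⟩
  have := hle _ (min_le_right (j₀ + 1) J)
  have := hle (j₀ - 1) (by simp at hj₀; omega)
  unfold neumannLap
  linarith

lemma exists_isMax_neumannLap_nonpos (J : ℕ) (v : ℕ → ℝ) :
    ∃ j₀ ≤ J, (∀ j ≤ J, v j ≤ v j₀) ∧ neumannLap J v j₀ ≤ 0 := by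
  obtain ⟨j₀, hj₀, hmin, hlap⟩ := exists_isMin_neumannLap_nonneg J (fun j => -v j)
  refine ⟨j₀, hj₀, fun j hj => neg_le_neg_iff.mp (hmin j hj), ?_⟩
  unfold neumannLap at hlap ⊢
  linarith

section MaximumPrinciple

variable {dt c h q a a' l : ℝ}

lemma min_le_of_implicit_step (hdt : 0 < dt) (hc : 0 ≤ c) (hh : 0 ≤ h) (hq : 0 ≤ q)
    (hl : 0 ≤ l) (heq : (a' - a) / dt + c * (l / h) = q * a) : min a' 0 ≤ a := by
  by_contra! ha
  have hdiff : 0 < (a' - a) / dt := div_pos (by linarith [min_le_left a' 0]) hdt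
  have : q * a ≤ 0 := mul_nonpos_of_nonneg_of_nonpos hq (by linarith [min_le_right a' 0])
  have : 0 ≤ c * (l / h) := by positivity
  linarith

lemma le_max_of_implicit_step (hdt : 0 < dt) (hc : 0 ≤ c) (hh : 0 ≤ h) (hq : 0 ≤ q)
    (hl : l ≤ 0) (heq : (a' - a) / dt + c * (l / h) = q * a) : a ≤ max a' 0 := by
  by_contra! ha
  have hdiff : (a' - a) / dt < 0 := div_neg_of_neg_of_pos (by linarith [le_max_left a' 0]) hdt
  have : 0 ≤ q * a := mul_nonneg hq (by linarith [le_max_right a' 0])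
  have : c * (l / h) ≤ 0 := mul_nonpos_of_nonneg_of_nonpos hc (div_nonpos_of_nonpos_of_nonneg hl hh)
  linarith

variable {J : ℕ} {q v v' : ℕ → ℝ}

lemma nonneg_of_implicit_step (hdt : 0 < dt) (hc : 0 ≤ c) (hh : 0 ≤ h)
    (hq : ∀ j ≤ J, 0 ≤ q j)
    (heq : ∀ j ≤ J, (v' j - v j) / dt + c * (neumannLap J v j / h) = q j * v j)
    (hv' : ∀ j ≤ J, 0 ≤ v' j) : ∀ j ≤ J, 0 ≤ v j := by
  obtain ⟨j₀, hj₀, hmin, hlap⟩ := exists_isMin_neumannLap_nonneg J v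
  have := min_le_of_implicit_step hdt hc hh (hq j₀ hj₀) hlap (heq j₀ hj₀)
  rw [min_eq_right (hv' j₀ hj₀)] at this
  exact fun j hj => this.trans (hmin j hj)

lemma le_of_implicit_step {B : ℝ} (hB : 0 ≤ B) (hdt : 0 < dt) (hc : 0 ≤ c) (hh : 0 ≤ h)
    (hq : ∀ j ≤ J, 0 ≤ q j)
    (heq : ∀ j ≤ J, (v' j - v j) / dt + c * (neumannLap J v j / h) = q j * v j)
    (hv' : ∀ j ≤ J, v' j ≤ B) : ∀ j ≤ J, v j ≤ B := by
  obtain ⟨j₀, hj₀, hmax, hlap⟩ := exists_isMax_neumannLap_nonpos J v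
  have := le_max_of_implicit_step hdt hc hh (hq j₀ hj₀) hlap (heq j₀ hj₀)
  exact fun j hj => (hmax j hj).trans (this.trans (max_le (hv' j₀ hj₀) hB))

end MaximumPrinciple

lemma nonneg_of_lipschitz_on_nonneg {g : ℝ → ℝ} {K : ℝ}
    (hK : ∀ ξ₁ ξ₂ : ℝ, 0 ≤ ξ₁ → 0 ≤ ξ₂ → |g ξ₂ - g ξ₁| ≤ K * |ξ₂ - ξ₁|) : 0 ≤ K := by
  simpa using (abs_nonneg _).trans (hK 0 1 le_rfl zero_le_one)

lemma sub_mul_sub_le_of_antitone {g : ℝ → ℝ} (hg : ∀ ξ, g ξ ≤ 0) (hmono : Antitone g) {K : ℝ}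
    (hK : ∀ ξ₁ ξ₂ : ℝ, 0 ≤ ξ₁ → 0 ≤ ξ₂ → |g ξ₂ - g ξ₁| ≤ K * |ξ₂ - ξ₁|)
    {a b p q : ℝ} (ha : 0 ≤ a) (hp : 0 ≤ p) (hq : 0 ≤ q) :
    (g (a * p) * a - g (b * q) * b) * (a - b) ≤ K * a ^ 2 * (|p - q| * |a - b|) := by
  have hsplit : (g (a * p) * a - g (b * q) * b) * (a - b)
      = g (b * q) * (a - b) ^ 2 + (g (a * p) - g (a * q)) * (a * (a - b))
        + (g (a * q) - g (b * q)) * (a * (a - b)) := by ring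
  have hdiag : g (b * q) * (a - b) ^ 2 ≤ 0 := mul_nonpos_of_nonpos_of_nonneg (hg _) (sq_nonneg _)
  have hmon : (g (a * q) - g (b * q)) * (a * (a - b)) ≤ 0 := by
    rcases le_total a b with hab | hab
    · exact mul_nonpos_of_nonneg_of_nonpos
        (sub_nonneg.mpr (hmono (mul_le_mul_of_nonneg_right hab hq)))
        (mul_nonpos_of_nonneg_of_nonpos ha (sub_nonpos.mpr hab))
    · exact mul_nonpos_of_nonpos_of_nonneg
        (sub_nonpos.mpr (hmono (mul_le_mul_of_nonneg_right hab hq)))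
        (mul_nonneg ha (sub_nonneg.mpr hab))
  have hlip : (g (a * p) - g (a * q)) * (a * (a - b)) ≤ K * a ^ 2 * (|p - q| * |a - b|) :=
    calc (g (a * p) - g (a * q)) * (a * (a - b))
        ≤ |(g (a * p) - g (a * q)) * (a * (a - b))| := le_abs_self _
      _ = |g (a * p) - g (a * q)| * (a * |a - b|) := by rw [abs_mul, abs_mul, abs_of_nonneg ha]
      _ ≤ K * |a * p - a * q| * (a * |a - b|) := by
          gcongr; exact hK _ _ (mul_nonneg ha hq) (mul_nonneg ha hp)
      _ = K * a ^ 2 * (|p - q| * |a - b|) := by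
          rw [← mul_sub, abs_mul, abs_of_nonneg ha]; ring
  linarith

lemma sub_eq_add_of_implicit_steps {dt c h k a a' l F b b' m G η : ℝ} (hdt : dt ≠ 0)
    (ha : (a' - a) / dt + c * (l / h) = -k * F * a)
    (hb : η = (b' - b) / dt + c * (m / h) + k * G * b) :
    a - b = (a' - b') + dt * (c * ((l - m) / h) + k * (F * a - G * b) + η) := by
  rw [hb]
  field_simp at ha ⊢
  linear_combination (-1 : ℝ) * ha

lemma sq_le_of_implicit_step {dt L e e' Δ N w η : ℝ} (hdt : 0 ≤ dt) (hL : 0 ≤ L)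
    (hstep : e = e' + dt * (Δ + N + η)) (hN : N * e ≤ L * (|w| * |e|)) :
    e ^ 2 ≤ (e' ^ 2 + e ^ 2) / 2 + dt * (Δ * e)
      + dt * (L * ((w ^ 2 + e ^ 2) / 2) + (η ^ 2 + e ^ 2) / 2) := by
  have hexpand : e ^ 2 = e' * e + dt * (Δ * e) + dt * (N * e) + dt * (η * e) := by
    linear_combination e * hstep
  have hyoung : ∀ x y : ℝ, x * y ≤ (x ^ 2 + y ^ 2) / 2 := fun x y => by
    nlinarith [sq_nonneg (x - y)]
  have hNe : dt * (N * e) ≤ dt * (L * ((w ^ 2 + e ^ 2) / 2)) := by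
    refine mul_le_mul_of_nonneg_left ?_ hdt
    calc N * e ≤ L * (|w| * |e|) := hN
      _ ≤ L * ((|w| ^ 2 + |e| ^ 2) / 2) := by gcongr; exact hyoung _ _
      _ = L * ((w ^ 2 + e ^ 2) / 2) := by rw [sq_abs, sq_abs]
  have hηe : dt * (η * e) ≤ dt * ((η ^ 2 + e ^ 2) / 2) := by gcongr; exact hyoung _ _
  linarith [hyoung e' e]

def rowSq (J : ℕ) (m : ℕ → ℕ → ℝ) (i : ℕ) : ℝ := ∑ j ∈ range (J + 1), m i j ^ 2

lemma rowSq_nonneg (J : ℕ) (m : ℕ → ℕ → ℝ) (i : ℕ) : 0 ≤ rowSq J m i :=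
  sum_nonneg fun _ _ => sq_nonneg _

lemma rowSq_le_gnormSq {I J i : ℕ} (m : ℕ → ℕ → ℝ) (hi : i ≤ I) :
    rowSq J m i ≤ (J + 1) * gnormSq I J m := by
  have h : 1 / ((J:ℝ) + 1) * rowSq J m i ≤ gnormSq I J m :=
    le_sup' (fun i => 1 / ((J:ℝ) + 1) * rowSq J m i) (mem_range.mpr (Nat.lt_succ_of_le hi))
  rwa [one_div_mul_eq_div, div_le_iff₀' (by positivity)] at h

lemma gnormSq_nonneg (I J : ℕ) (m : ℕ → ℕ → ℝ) : 0 ≤ gnormSq I J m :=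
  nonneg_of_mul_nonneg_right ((rowSq_nonneg J m 0).trans (rowSq_le_gnormSq m (Nat.zero_le I)))
    (by positivity)

lemma gnormSq_le {I J : ℕ} {m : ℕ → ℕ → ℝ} {B : ℝ} (h : ∀ i ≤ I, rowSq J m i ≤ (J + 1) * B) :
    gnormSq I J m ≤ B :=
  sup'_le _ _ fun i hi => by
    rw [one_div_mul_eq_div, div_le_iff₀' (by positivity)]
    exact h i (Nat.lt_succ_iff.mp (mem_range.mp hi))

def backwardResidual (T σ : ℝ) (I J : ℕ) (f : ℝ → ℝ → ℝ) (ψ φ : ℕ → ℕ → ℝ) : ℕ → ℕ → ℝ :=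
  fun i j =>
    if i < I then
      (φ (i+1) j - φ i j) / (T/(I:ℝ))
        + σ^2/2 * ((φ i (min (j+1) J) - 2*φ i j + φ i (j-1)) / (1/(J:ℝ))^2)
        + (1/σ^2) * f ((j:ℝ)/(J:ℝ)) (φ i j * ψ i j) * φ i j
    else 0

lemma pow_mul_le_of_backward_recursion {I : ℕ} {s : ℕ → ℝ} {θ D : ℝ} (hθ : 0 < θ) (hθ1 : θ ≤ 1)
    (hD : 0 ≤ D) (hs0 : ∀ i, 0 ≤ s i) (hsI : s I = 0) (hs : ∀ i < I, θ * s i ≤ s (i + 1) + D) :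
    ∀ i ≤ I, θ ^ I * s i ≤ I * D := by
  have hback : ∀ d ≤ I, θ ^ d * s (I - d) ≤ d * D := by
    intro d
    induction d with
    | zero => simp [hsI]
    | succ d ih =>
      intro hd
      have hrec := hs (I - (d + 1)) (by omega)
      rw [show I - (d + 1) + 1 = I - d by omega] at hrec
      calc θ ^ (d + 1) * s (I - (d + 1)) = θ ^ d * (θ * s (I - (d + 1))) := by ring
        _ ≤ θ ^ d * (s (I - d) + D) := by gcongr
        _ ≤ d * D + 1 * D := by
          rw [mul_add]
          exact add_le_add (ih (by omega)) (by gcongr; exact pow_le_one₀ hθ.le hθ1)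
        _ = (d + 1 : ℕ) * D := by push_cast; ring
  intro i hi
  calc θ ^ I * s i ≤ θ ^ (I - i) * s (I - (I - i)) := by
        rw [Nat.sub_sub_self hi]
        exact mul_le_mul_of_nonneg_right (pow_le_pow_of_le_one hθ.le hθ1 (Nat.sub_le I i)) (hs0 i)
    _ ≤ (I - i : ℕ) * D := hback _ (Nat.sub_le I i)
    _ ≤ I * D := by gcongr; exact Nat.sub_le I i

lemma inv_pow_le_exp_of_cfl {dt L ν : ℝ} (n : ℕ) (hdt : 0 < dt) (hL : 0 ≤ L) (hν : 0 < ν)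
    (hcfl : dt * (L + 1 + ν) < 1) :
    (1 - dt * (L + 1))⁻¹ ^ n ≤ exp (n * dt * (L + 1) * (L + 1 + ν) / ν) := by
  set θ := 1 - dt * (L + 1)
  have hθ : ν / (L + 1 + ν) < θ := by
    rw [div_lt_iff₀ (by positivity)]; nlinarith
  have hθ0 : 0 < θ := lt_trans (by positivity) hθ
  have hθinv : θ⁻¹ ≤ (L + 1 + ν) / ν := by
    rw [← inv_div]; exact inv_anti₀ (by positivity) hθ.le
  have hstep : θ⁻¹ ≤ exp (dt * (L + 1) * (L + 1 + ν) / ν) := by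
    calc θ⁻¹ = dt * (L + 1) * θ⁻¹ + 1 := by field_simp; ring
      _ ≤ dt * (L + 1) * ((L + 1 + ν) / ν) + 1 := by gcongr
      _ = dt * (L + 1) * (L + 1 + ν) / ν + 1 := by ring
      _ ≤ exp (dt * (L + 1) * (L + 1 + ν) / ν) := add_one_le_exp _
  calc θ⁻¹ ^ n ≤ exp (dt * (L + 1) * (L + 1 + ν) / ν) ^ n := by gcongr
    _ = exp (n * dt * (L + 1) * (L + 1 + ν) / ν) := by rw [← exp_nat_mul]; ring_nf

lemma le_exp_mul_of_backward_recursion {I : ℕ} {s : ℕ → ℝ} {dt L ν D : ℝ} (hdt : 0 < dt)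
    (hL : 0 ≤ L) (hν : 0 < ν) (hcfl : dt * (L + 1 + ν) < 1) (hD : 0 ≤ D) (hs0 : ∀ i, 0 ≤ s i)
    (hsI : s I = 0) (hs : ∀ i < I, (1 - dt * (L + 1)) * s i ≤ s (i + 1) + dt * D) :
    ∀ i ≤ I, s i ≤ exp (I * dt * (L + 1) * (L + 1 + ν) / ν) * (I * dt * D) := by
  set θ := 1 - dt * (L + 1)
  have hθ0 : 0 < θ := by nlinarith
  have hθ1 : θ ≤ 1 := by nlinarith
  intro i hi
  calc s i = θ⁻¹ ^ I * (θ ^ I * s i) := by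
        rw [← mul_assoc, ← mul_pow, inv_mul_cancel₀ hθ0.ne', one_pow, one_mul]
    _ ≤ exp (I * dt * (L + 1) * (L + 1 + ν) / ν) * (I * (dt * D)) :=
        mul_le_mul (inv_pow_le_exp_of_cfl I hdt hL hν hcfl)
          (pow_mul_le_of_backward_recursion hθ0 hθ1 (by positivity) hs0 hsI hs i hi)
          (mul_nonneg (pow_nonneg hθ0.le I) (hs0 i)) (exp_pos _).le
    _ = exp (I * dt * (L + 1) * (L + 1 + ν) / ν) * (I * dt * D) := by ring

lemma div_mem_Icc_zero_one {j J : ℕ} (hj : j ≤ J) : (j : ℝ) / J ∈ Set.Icc (0 : ℝ) 1 :=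
  ⟨by positivity, div_le_one_of_le₀ (by exact_mod_cast hj) (Nat.cast_nonneg J)⟩

lemma abs_le_supIcc {g : ℝ → ℝ} (hg : ∃ C, ∀ x ∈ Set.Icc (0:ℝ) 1, |g x| ≤ C) {x : ℝ}
    (hx : x ∈ Set.Icc (0:ℝ) 1) : |g x| ≤ supIcc g := by
  obtain ⟨C, hC⟩ := hg
  exact le_ciSup (f := fun y : Set.Icc (0:ℝ) 1 => |g y|)
    ⟨C, by rintro _ ⟨y, rfl⟩; exact hC y y.2⟩ ⟨x, hx⟩

section Schemes

variable {T σ : ℝ} {I J : ℕ} {f : ℝ → ℝ → ℝ} {uT m0 : ℝ → ℝ} {K : ℝ}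

lemma BScheme.mem_Icc {ψ φ : ℕ → ℕ → ℝ} (hs : BScheme T σ I J f uT ψ φ) (hT : 0 < T) (hI : 0 < I)
    (hfneg : ∀ x ∈ Set.Icc (0:ℝ) 1, ∀ ξ : ℝ, f x ξ ≤ 0)
    {B : ℝ} (hB : ∀ j ≤ J, exp (uT ((j:ℝ)/(J:ℝ)) / σ^2) ≤ B) :
    ∀ i ≤ I, ∀ j ≤ J, φ i j ∈ Set.Icc 0 B := by
  have hdt : 0 < T / (I:ℝ) := by positivity
  have hB0 : 0 ≤ B := (exp_pos _).le.trans (hB 0 (Nat.zero_le J))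
  intro i hi
  induction hi using Nat.decreasingInduction with
  | self => exact fun j hj => ⟨hs.2 j hj ▸ (exp_pos _).le, hs.2 j hj ▸ hB j hj⟩
  | of_succ i hi ih =>
    have hq : ∀ j ≤ J, 0 ≤ -(1/σ^2) * f ((j:ℝ)/(J:ℝ)) (φ i j * ψ i j) := fun j hj =>
      mul_nonneg_of_nonpos_of_nonpos (neg_nonpos.mpr (by positivity))
        (hfneg _ (div_mem_Icc_zero_one hj) _)
    exact fun j hj =>
      ⟨nonneg_of_implicit_step hdt (by positivity) (by positivity) hq (hs.1 i hi)
          (fun j hj => (ih j hj).1) j hj,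
        le_of_implicit_step hB0 hdt (by positivity) (by positivity) hq (hs.1 i hi)
          (fun j hj => (ih j hj).2) j hj⟩

lemma FScheme.nonneg {φ ψ : ℕ → ℕ → ℝ} (hs : FScheme T σ I J f m0 φ ψ) (hT : 0 < T) (hI : 0 < I)
    (hfneg : ∀ x ∈ Set.Icc (0:ℝ) 1, ∀ ξ : ℝ, f x ξ ≤ 0) (h0 : ∀ j ≤ J, 0 ≤ ψ 0 j) :
    ∀ i ≤ I, ∀ j ≤ J, 0 ≤ ψ i j := by
  have hdt : 0 < T / (I:ℝ) := by positivity
  intro i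
  induction i with
  | zero => exact fun _ => h0
  | succ i ih =>
    intro hi
    have hq : ∀ j ≤ J, 0 ≤ -(1/σ^2) * f ((j:ℝ)/(J:ℝ)) (φ (i+1) j * ψ (i+1) j) := fun j hj =>
      mul_nonneg_of_nonpos_of_nonpos (neg_nonpos.mpr (by positivity))
        (hfneg _ (div_mem_Icc_zero_one hj) _)
    -- read backwards in time, the forward step is an implicit step of the same shape
    have heq : ∀ j ≤ J, (ψ i j - ψ (i+1) j) / (T / I)
        + σ^2 / 2 * (neumannLap J (ψ (i+1)) j / (1/(J:ℝ))^2)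
        = -(1/σ^2) * f ((j:ℝ)/(J:ℝ)) (φ (i+1) j * ψ (i+1) j) * ψ (i+1) j := fun j hj => by
      unfold neumannLap
      linear_combination (-1 : ℝ) * hs.1 i hi j hj
    exact nonneg_of_implicit_step hdt (by positivity) (by positivity) hq heq (ih (by omega))

lemma BScheme.sq_sub_le {ψ φ : ℕ → ℕ → ℝ} (hs : BScheme T σ I J f uT ψ φ)
    (hT : 0 < T) (hI : 0 < I)
    (hfneg : ∀ x ∈ Set.Icc (0:ℝ) 1, ∀ ξ : ℝ, f x ξ ≤ 0)
    (hfmono : ∀ x ∈ Set.Icc (0:ℝ) 1, Antitone (f x))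
    (hK : ∀ x ∈ Set.Icc (0:ℝ) 1, ∀ ξ₁ ξ₂ : ℝ, 0 ≤ ξ₁ → 0 ≤ ξ₂ →
      |f x ξ₂ - f x ξ₁| ≤ K * |ξ₂ - ξ₁|)
    {B L : ℝ} (hL : K / σ^2 * B^2 ≤ L) (hL0 : 0 ≤ L) (ψt φt : ℕ → ℕ → ℝ) {i j : ℕ}
    (hi : i < I) (hj : j ≤ J) (hφ : φ i j ∈ Set.Icc 0 B) (hψ : 0 ≤ ψ i j) (hψt : 0 ≤ ψt i j) :
    (φ - φt) i j ^ 2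
      ≤ ((φ - φt) (i + 1) j ^ 2 + (φ - φt) i j ^ 2) / 2
        + T / I * (σ^2 / 2 * (neumannLap J ((φ - φt) i) j / (1 / (J:ℝ)) ^ 2) * (φ - φt) i j)
        + T / I * (L * (((ψ - ψt) i j ^ 2 + (φ - φt) i j ^ 2) / 2)
          + (backwardResidual T σ I J f ψt φt i j ^ 2 + (φ - φt) i j ^ 2) / 2) := by
  have hx := div_mem_Icc_zero_one hj
  set x := (j:ℝ) / (J:ℝ)
  have hstep := sub_eq_add_of_implicit_steps (by positivity) (hs.1 i hi j hj)
    (show backwardResidual T σ I J f ψt φt i j = _ from if_pos hi)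
  refine sq_le_of_implicit_step (by positivity) hL0
    (N := 1 / σ^2 * (f x (φ i j * ψ i j) * φ i j - f x (φt i j * ψt i j) * φt i j)) ?_ ?_
  · simp only [Pi.sub_apply, neumannLap]
    linear_combination hstep
  have hnl := sub_mul_sub_le_of_antitone (hfneg _ hx) (hfmono _ hx) (hK _ hx) hφ.1 hψ hψt
    (b := φt i j)
  have ha2 : φ i j ^ 2 ≤ B ^ 2 := pow_le_pow_left₀ hφ.1 hφ.2 2
  have hK0 := nonneg_of_lipschitz_on_nonneg (hK x hx)
  calc 1 / σ^2 * (f x (φ i j * ψ i j) * φ i j - f x (φt i j * ψt i j) * φt i j) * (φ - φt) i j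
      ≤ 1 / σ^2 * (K * φ i j ^ 2 * (|(ψ - ψt) i j| * |(φ - φt) i j|)) := by
        rw [mul_assoc]; exact mul_le_mul_of_nonneg_left hnl (by positivity)
    _ ≤ 1 / σ^2 * (K * B ^ 2 * (|(ψ - ψt) i j| * |(φ - φt) i j|)) := by gcongr
    _ = K / σ^2 * B^2 * (|(ψ - ψt) i j| * |(φ - φt) i j|) := by ring
    _ ≤ L * (|(ψ - ψt) i j| * |(φ - φt) i j|) := by gcongr

lemma BScheme.rowSq_sub_le {ψ φ : ℕ → ℕ → ℝ} (hs : BScheme T σ I J f uT ψ φ)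
    (hT : 0 < T) (hI : 0 < I)
    (hfneg : ∀ x ∈ Set.Icc (0:ℝ) 1, ∀ ξ : ℝ, f x ξ ≤ 0)
    (hfmono : ∀ x ∈ Set.Icc (0:ℝ) 1, Antitone (f x))
    (hK : ∀ x ∈ Set.Icc (0:ℝ) 1, ∀ ξ₁ ξ₂ : ℝ, 0 ≤ ξ₁ → 0 ≤ ξ₂ →
      |f x ξ₂ - f x ξ₁| ≤ K * |ξ₂ - ξ₁|)
    {B L : ℝ} (hL : K / σ^2 * B^2 ≤ L) (hL0 : 0 ≤ L) (ψt φt : ℕ → ℕ → ℝ) {i : ℕ} (hi : i < I)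
    (hφ : ∀ j ≤ J, φ i j ∈ Set.Icc 0 B) (hψ : ∀ j ≤ J, 0 ≤ ψ i j)
    (hψt : ∀ j ≤ J, 0 ≤ ψt i j) :
    (1 - T / I * (L + 1)) * rowSq J (φ - φt) i
      ≤ rowSq J (φ - φt) (i + 1)
        + T / I * (L * rowSq J (ψ - ψt) i + rowSq J (backwardResidual T σ I J f ψt φt) i) := by
  have hsum := sum_le_sum fun j hj =>
    have hj : j ≤ J := Nat.lt_succ_iff.mp (mem_range.mp hj)
    hs.sq_sub_le hT hI hfneg hfmono hK hL hL0 ψt φt hi hj (hφ j hj) (hψ j hj) (hψt j hj)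
  simp only [sum_add_distrib, ← mul_sum, ← sum_div] at hsum
  have hdiss : ∑ j ∈ range (J + 1),
      σ^2 / 2 * (neumannLap J ((φ - φt) i) j / (1 / (J:ℝ)) ^ 2) * (φ - φt) i j ≤ 0 := by
    simp only [mul_div_assoc', div_mul_eq_mul_div, ← sum_div, ← mul_sum, mul_assoc]
    rw [sum_neumannLap_mul_self, mul_neg, neg_div, neg_div, neg_nonpos]
    positivity
  have hdt : 0 ≤ T / (I:ℝ) := by positivity
  unfold rowSq
  nlinarith [mul_nonpos_of_nonneg_of_nonpos hdt hdiss]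

lemma BScheme.gnormSq_sub_le {ψ φ : ℕ → ℕ → ℝ} (hs : BScheme T σ I J f uT ψ φ)
    (hT : 0 < T) (hI : 0 < I)
    (hfneg : ∀ x ∈ Set.Icc (0:ℝ) 1, ∀ ξ : ℝ, f x ξ ≤ 0)
    (hfmono : ∀ x ∈ Set.Icc (0:ℝ) 1, Antitone (f x))
    (hK : ∀ x ∈ Set.Icc (0:ℝ) 1, ∀ ξ₁ ξ₂ : ℝ, 0 ≤ ξ₁ → 0 ≤ ξ₂ →
      |f x ξ₂ - f x ξ₁| ≤ K * |ξ₂ - ξ₁|)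
    {B L ν : ℝ} (hL : K / σ^2 * B^2 ≤ L) (hL0 : 0 ≤ L) (hν : 0 < ν)
    (hcfl : (I:ℝ) / T > 1 + L + ν)
    (hφ : ∀ i ≤ I, ∀ j ≤ J, φ i j ∈ Set.Icc 0 B) (hψ : ∀ i ≤ I, ∀ j ≤ J, 0 ≤ ψ i j)
    (ψt φt : ℕ → ℕ → ℝ) (hψt : MemM I J 0 ψt)
    (hterm : ∀ j ≤ J, φt I j = exp (uT ((j:ℝ)/(J:ℝ)) / σ^2)) :
    gnormSq I J (φ - φt)
      ≤ T * (L + 1) * exp (T * (L + 1) * (L + 1 + ν) / ν) * gnormSq I J (ψ - ψt)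
        + T * (L + 1) * exp (T * (L + 1) * (L + 1 + ν) / ν)
          * gnormSq I J (backwardResidual T σ I J f ψt φt) := by
  set Bw := gnormSq I J (ψ - ψt)
  set Bh := gnormSq I J (backwardResidual T σ I J f ψt φt)
  have hBw : 0 ≤ Bw := gnormSq_nonneg I J _
  have hBh : 0 ≤ Bh := gnormSq_nonneg I J _
  have hIdt : (I:ℝ) * (T / I) = T := by field_simp
  have hcfl' : T / I * (L + 1 + ν) < 1 := by
    rw [div_mul_eq_mul_div, div_lt_one (by positivity)]
    rw [gt_iff_lt, lt_div_iff₀ hT] at hcfl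
    linarith
  have hrec : ∀ i < I, (1 - T / I * (L + 1)) * rowSq J (φ - φt) i
      ≤ rowSq J (φ - φt) (i + 1) + T / I * ((J + 1) * (L * Bw + Bh)) := fun i hi => by
    have hW := rowSq_le_gnormSq (ψ - ψt) (J := J) hi.le
    have hH := rowSq_le_gnormSq (backwardResidual T σ I J f ψt φt) (J := J) hi.le
    have hsource : L * rowSq J (ψ - ψt) i + rowSq J (backwardResidual T σ I J f ψt φt) i
        ≤ (J + 1) * (L * Bw + Bh) := by nlinarith [mul_le_mul_of_nonneg_left hW hL0]
    calc _ ≤ _ := hs.rowSq_sub_le hT hI hfneg hfmono hK hL hL0 ψt φt hi (hφ i hi.le)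
          (hψ i hi.le) (hψt i hi.le)
      _ ≤ _ := add_le_add_right (mul_le_mul_of_nonneg_left hsource (by positivity)) _
  have hSI : rowSq J (φ - φt) I = 0 :=
    sum_eq_zero fun j hj => by
      have hj : j ≤ J := Nat.lt_succ_iff.mp (mem_range.mp hj)
      simp [hs.2 j hj, hterm j hj]
  refine gnormSq_le fun i hi => ?_
  have hgron := le_exp_mul_of_backward_recursion (by positivity) hL0 hν hcfl' (by positivity)
    (rowSq_nonneg J _) hSI hrec i hi
  rw [hIdt] at hgron
  have hTE : 0 ≤ T * exp (T * (L + 1) * (L + 1 + ν) / ν) := by positivity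
  calc _ ≤ _ := hgron
    _ = (J + 1) * (T * exp (T * (L + 1) * (L + 1 + ν) / ν) * (L * Bw + Bh)) := by ring
    _ ≤ _ := by
        gcongr (J + 1) * ?_
        nlinarith [mul_nonneg hTE (add_nonneg hBw (mul_nonneg hL0 hBh))]

end Schemes

theorem stmt_9_general (T σ : ℝ) (hT : 0 < T)
    (f : ℝ → ℝ → ℝ) (uT m0 : ℝ → ℝ)
    (hfneg : ∀ x ∈ Set.Icc (0:ℝ) 1, ∀ ξ : ℝ, f x ξ ≤ 0)
    (hfmono : ∀ x ∈ Set.Icc (0:ℝ) 1, Antitone (f x))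
    (huTb : ∃ B : ℝ, ∀ x ∈ Set.Icc (0:ℝ) 1, |uT x| ≤ B)
    (hm0 : ∀ x ∈ Set.Icc (0:ℝ) 1, 0 ≤ m0 x)
    (K : ℝ)
    (hK : ∀ x ∈ Set.Icc (0:ℝ) 1, ∀ ξ₁ ξ₂ : ℝ, 0 ≤ ξ₁ → 0 ≤ ξ₂ →
      |f x ξ₂ - f x ξ₁| ≤ K * |ξ₂ - ξ₁|)
    (ν : ℝ) (hν : 0 < ν) :
    ∃ C > 0, ∀ I J : ℕ, 1 ≤ I → 1 ≤ J →
      (I:ℝ)/T > 1 + K/σ^2 *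
        max ((supIcc fun x => Real.exp (uT x / σ^2))^2)
            ((supIcc m0)^2 / (Real.exp (-(supIcc uT + supF f * T) / σ^2))^2) + ν →
      ∀ Φs Ψs : ℕ → ℕ → ℕ → ℝ,
        (∀ i ≤ I, ∀ j ≤ J, Ψs 0 i j = 0) →
        (∀ m : ℕ, BScheme T σ I J f uT (Ψs m) (Φs m)) →
        (∀ m : ℕ, FScheme T σ I J f m0 (Φs m) (Ψs (m+1))) →
      ∀ n : ℕ, ∀ ψt φt : ℕ → ℕ → ℝ,
        MemM I J 0 ψt →
        MemM I J (Real.exp (-(supIcc uT + supF f * T) / σ^2)) φt →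
        (∀ j ≤ J, φt I j = Real.exp (uT ((j:ℝ)/(J:ℝ)) / σ^2)) →
        gnormSq I J (fun i j => Φs n i j - φt i j)
          ≤ C * gnormSq I J (fun i j => Ψs n i j - ψt i j)
            + C * gnormSq I J (fun i j =>
                if i < I then
                  (φt (i+1) j - φt i j) / (T/(I:ℝ))
                    + σ^2/2 * ((φt i (min (j+1) J) - 2*φt i j + φt i (j-1)) / (1/(J:ℝ))^2)
                    + (1/σ^2) * f ((j:ℝ)/(J:ℝ)) (φt i j * ψt i j) * φt i j
                else 0) := by
  obtain ⟨Bu, hBu⟩ := huTb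
  have hK0 := nonneg_of_lipschitz_on_nonneg (hK 0 ⟨le_rfl, zero_le_one⟩)
  set B := supIcc fun x => exp (uT x / σ^2)
  set L := K / σ^2 * max (B^2) ((supIcc m0)^2 / (exp (-(supIcc uT + supF f * T) / σ^2))^2)
  have hL : K / σ^2 * B^2 ≤ L := mul_le_mul_of_nonneg_left (le_max_left _ _) (by positivity)
  have hL0 : 0 ≤ L := (by positivity : 0 ≤ K / σ^2 * B^2).trans hL
  refine ⟨T * (L + 1) * exp (T * (L + 1) * (L + 1 + ν) / ν),
    mul_pos (mul_pos hT (by linarith)) (exp_pos _), ?_⟩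
  intro I J hI _ hcfl Φs Ψs hΨ0 hBs hFs n ψt φt hψt _ hterm
  have hexp_bdd : ∃ C, ∀ x ∈ Set.Icc (0:ℝ) 1, |exp (uT x / σ^2)| ≤ C :=
    ⟨exp (Bu / σ^2), fun x hx => by
      rw [abs_of_pos (exp_pos _)]
      gcongr
      exact (le_abs_self _).trans (hBu x hx)⟩
  have hB : ∀ j ≤ J, exp (uT ((j:ℝ)/(J:ℝ)) / σ^2) ≤ B := fun j hj =>
    (le_abs_self _).trans (abs_le_supIcc hexp_bdd (div_mem_Icc_zero_one hj))
  have hΦ : ∀ m, ∀ i ≤ I, ∀ j ≤ J, Φs m i j ∈ Set.Icc 0 B := fun m =>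
    (hBs m).mem_Icc hT hI hfneg hB
  have hΨ : ∀ i ≤ I, ∀ j ≤ J, 0 ≤ Ψs n i j := by
    cases n with
    | zero => exact fun i hi j hj => (hΨ0 i hi j hj).ge
    | succ m =>
      refine (hFs m).nonneg hT hI hfneg fun j hj => ?_
      rw [(hFs m).2 j hj]
      exact div_nonneg (hm0 _ (div_mem_Icc_zero_one hj)) (hΦ m 0 (Nat.zero_le I) j hj).1
  exact (hBs n).gnormSq_sub_le hT hI hfneg hfmono hK hL hL0 hν hcfl (hΦ n) hΨ ψt φt hψt hterm

theorem stmt_9 (T σ : ℝ) (hT : 0 < T) (hσ : 0 < σ)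
    (f : ℝ → ℝ → ℝ) (uT m0 : ℝ → ℝ)
    (hfc : ∀ x ∈ Set.Icc (0:ℝ) 1, Continuous (f x))
    (hfb : ∃ B : ℝ, ∀ x ∈ Set.Icc (0:ℝ) 1, ∀ ξ : ℝ, |f x ξ| ≤ B)
    (hfneg : ∀ x ∈ Set.Icc (0:ℝ) 1, ∀ ξ : ℝ, f x ξ ≤ 0)
    (hfmono : ∀ x ∈ Set.Icc (0:ℝ) 1, Antitone (f x))
    (huTb : ∃ B : ℝ, ∀ x ∈ Set.Icc (0:ℝ) 1, |uT x| ≤ B)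
    (hm0b : ∃ B : ℝ, ∀ x ∈ Set.Icc (0:ℝ) 1, |m0 x| ≤ B)
    (hm0 : ∀ x ∈ Set.Icc (0:ℝ) 1, 0 ≤ m0 x)
    (K : ℝ)
    (hK : ∀ x ∈ Set.Icc (0:ℝ) 1, ∀ ξ₁ ξ₂ : ℝ, 0 ≤ ξ₁ → 0 ≤ ξ₂ →
      |f x ξ₂ - f x ξ₁| ≤ K * |ξ₂ - ξ₁|)
    (ν : ℝ) (hν : 0 < ν) :
    ∃ C > 0, ∀ I J : ℕ, 1 ≤ I → 1 ≤ J →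
      (I:ℝ)/T > 1 + K/σ^2 *
        max ((supIcc fun x => Real.exp (uT x / σ^2))^2)
            ((supIcc m0)^2 / (Real.exp (-(supIcc uT + supF f * T) / σ^2))^2) + ν →
      ∀ Φs Ψs : ℕ → ℕ → ℕ → ℝ,
        (∀ i ≤ I, ∀ j ≤ J, Ψs 0 i j = 0) →
        (∀ m : ℕ, BScheme T σ I J f uT (Ψs m) (Φs m)) →
        (∀ m : ℕ, FScheme T σ I J f m0 (Φs m) (Ψs (m+1))) →
      ∀ n : ℕ, ∀ ψt φt : ℕ → ℕ → ℝ,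
        MemM I J 0 ψt →
        MemM I J (Real.exp (-(supIcc uT + supF f * T) / σ^2)) φt →
        (∀ j ≤ J, φt I j = Real.exp (uT ((j:ℝ)/(J:ℝ)) / σ^2)) →
        gnormSq I J (fun i j => Φs n i j - φt i j)
          ≤ C * gnormSq I J (fun i j => Ψs n i j - ψt i j)
            + C * gnormSq I J (fun i j =>
                if i < I then
                  (φt (i+1) j - φt i j) / (T/(I:ℝ))
                    + σ^2/2 * ((φt i (min (j+1) J) - 2*φt i j + φt i (j-1)) / (1/(J:ℝ))^2)
                    + (1/σ^2) * f ((j:ℝ)/(J:ℝ)) (φt i j * ψt i j) * φt i j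
                else 0) :=
  stmt_9_general T σ hT f uT m0 hfneg hfmono huTb hm0 K hK ν hν
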